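/- Let m₁, m₂ and n be positive integers. There exists a positive integer N = N(m₁, m₂, n) such that the following holds: if each edge of the complete graph K_N is labeled with a subset of the vertex set, such that no edge receives a label set containing one of its end-vertices, then one of the following occurs: (1) there is a set S of n vertices such that no edge with both ends in S has any vertex of S in its label set; or (2) there are m₁ edges and m₂ vertices such that each of these m₂ vertices appears in the label set of each of these m₁ edges. -/

import Mathlib

/-!
Outcome (1) asks for an `n`-set containing no triple `{u, v, x}` with `x ∈ L s(u, v)`, i.e. an
independent set of a 3-uniform hypergraph. If (2) fails, every `m₂`-set of vertices lies in the
labels of fewer than `m₁` edges, so double counting shows that at most `W` edges carry `W` or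
more labels. For `N = 16 n² W` the hypergraph then has at most `2 W N²` triples, so some
`2n`-set contains at most `n` of them, and deleting one vertex of each leaves the required set.
-/

open Finset

namespace Nat

theorem descFactorial_mul_pow_le {s N : ℕ} (hsN : s ≤ N) (k : ℕ) :
    s.descFactorial k * N ^ k ≤ N.descFactorial k * s ^ k := by
  induction k with
  | zero => simp
  | succ k ih =>
    have hstep : (s - k) * N ≤ (N - k) * s := by
      rw [Nat.sub_mul, Nat.sub_mul, Nat.mul_comm N s]
      exact Nat.sub_le_sub_left (Nat.mul_le_mul_left k hsN) _
    calc s.descFactorial (k + 1) * N ^ (k + 1)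
        = ((s - k) * N) * (s.descFactorial k * N ^ k) := by rw [descFactorial_succ, pow_succ]; ring
      _ ≤ ((N - k) * s) * (N.descFactorial k * s ^ k) := Nat.mul_le_mul hstep ih
      _ = N.descFactorial (k + 1) * s ^ (k + 1) := by rw [descFactorial_succ, pow_succ]; ring

theorem choose_mul_pow_le {s N : ℕ} (hsN : s ≤ N) (k : ℕ) :
    s.choose k * N ^ k ≤ N.choose k * s ^ k := by
  have h := descFactorial_mul_pow_le hsN k
  rw [descFactorial_eq_factorial_mul_choose, descFactorial_eq_factorial_mul_choose,
    mul_assoc, mul_assoc] at h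
  exact Nat.le_of_mul_le_mul_left h (factorial_pos k)

theorem choose_mul_pow_sub_le (N W m : ℕ) :
    N.choose m * (W + 1 - m) ^ m ≤ W.choose m * N ^ m := by
  have h := Nat.mul_le_mul (descFactorial_le_pow N m) (pow_sub_le_descFactorial W m)
  rw [descFactorial_eq_factorial_mul_choose, descFactorial_eq_factorial_mul_choose] at h
  refine Nat.le_of_mul_le_mul_left ?_ (factorial_pos m)
  calc m ! * (N.choose m * (W + 1 - m) ^ m) = m ! * N.choose m * (W + 1 - m) ^ m := by ring
    _ ≤ N ^ m * (m ! * W.choose m) := h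
    _ = m ! * (W.choose m * N ^ m) := by ring

end Nat

namespace Finset

variable {α ι : Type*} [DecidableEq α]

theorem sum_le_mul_card_add_mul_card_filter (E : Finset ι) (f : ι → ℕ) {W M : ℕ}
    (hM : ∀ e ∈ E, f e ≤ M) : ∑ e ∈ E, f e ≤ W * #E + M * #{e ∈ E | W ≤ f e} := by
  rw [← sum_filter_not_add_sum_filter E (fun e => W ≤ f e)]
  have hlight : ∑ e ∈ E with ¬W ≤ f e, f e ≤ W * #E := by
    refine (sum_le_card_nsmul _ _ W fun e he => ?_).trans ?_
    · exact (not_le.1 (mem_filter.1 he).2).le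
    · rw [smul_eq_mul, mul_comm]; exact Nat.mul_le_mul_left W (card_filter_le _ _)
  have hheavy : ∑ e ∈ E with W ≤ f e, f e ≤ M * #{e ∈ E | W ≤ f e} := by
    rw [mul_comm, ← smul_eq_mul]
    exact sum_le_card_nsmul _ _ M fun e he => hM e (mem_filter.1 he).1
  exact add_le_add hlight hheavy

theorem exists_subset_card_eq_forall_not_subset {S : Finset α} {𝒢 : Finset (Finset α)} {n : ℕ}
    (h𝒢 : ∀ A ∈ 𝒢, A.Nonempty) (hcard : #𝒢 + n ≤ #S) :
    ∃ T ⊆ S, #T = n ∧ ∀ A ∈ 𝒢, ¬A ⊆ T := by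
  let hit : 𝒢 → α := fun A => (h𝒢 A.1 A.2).choose
  have hn : n ≤ #(S \ 𝒢.attach.image hit) := by
    have := le_card_sdiff (𝒢.attach.image hit) S
    have := (card_image_le (s := 𝒢.attach) (f := hit)).trans_eq (card_attach (s := 𝒢))
    omega
  obtain ⟨T, hT, rfl⟩ := exists_subset_card_eq hn
  refine ⟨T, hT.trans sdiff_subset, rfl, fun A hA hAT => ?_⟩
  have hhit : hit ⟨A, hA⟩ ∈ T := hAT (h𝒢 A hA).choose_spec
  exact (mem_sdiff.1 (hT hhit)).2 (mem_image_of_mem hit (mem_attach _ _))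

variable [Fintype α]

theorem card_filter_powersetCard_subset_mul_pow_le (A : Finset α) {s : ℕ}
    (hs : s ≤ Fintype.card α) :
    #{S ∈ univ.powersetCard s | A ⊆ S} * Fintype.card α ^ #A
      ≤ (Fintype.card α).choose s * s ^ #A := by
  set N := Fintype.card α with hN
  rcases le_or_gt #A s with hAs | hsA
  · have hcount := card_filter_powersetCard_subset A univ s (subset_univ A) hAs
    rw [card_univ, ← hN] at hcount
    refine Nat.le_of_mul_le_mul_left ?_ (Nat.choose_pos (card_le_univ A))
    calc N.choose #A * (#{S ∈ univ.powersetCard s | A ⊆ S} * N ^ #A)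
        = N.choose s * (s.choose #A * N ^ #A) := by
          rw [hcount, ← mul_assoc, ← Nat.choose_mul hAs, mul_assoc]
      _ ≤ N.choose s * (N.choose #A * s ^ #A) :=
          Nat.mul_le_mul_left _ (Nat.choose_mul_pow_le hs _)
      _ = N.choose #A * (N.choose s * s ^ #A) := by ring
  · have hnone : {S ∈ (univ : Finset α).powersetCard s | A ⊆ S} = ∅ :=
      filter_eq_empty_iff.2 fun S hS hAS =>
        (card_le_card hAS).not_gt ((mem_powersetCard.1 hS).2 ▸ hsA)
    simp [hnone]

theorem exists_card_eq_forall_not_subset_of_card_mul_pow_le [Nonempty α]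
    {𝓕 : Finset (Finset α)} {k s n : ℕ} (hk : 0 < k) (h𝓕 : ∀ A ∈ 𝓕, #A = k)
    (hns : n ≤ s) (hsN : s ≤ Fintype.card α)
    (hcard : #𝓕 * s ^ k ≤ (s - n) * Fintype.card α ^ k) :
    ∃ T : Finset α, #T = n ∧ ∀ A ∈ 𝓕, ¬A ⊆ T := by
  set N := Fintype.card α
  set 𝒮 : Finset (Finset α) := univ.powersetCard s
  have hdouble : ∑ S ∈ 𝒮, #{A ∈ 𝓕 | A ⊆ S} * N ^ k ≤ ∑ _S ∈ 𝒮, (s - n) * N ^ k := by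
    have hswap : ∑ S ∈ 𝒮, #{A ∈ 𝓕 | A ⊆ S} = ∑ A ∈ 𝓕, #{S ∈ 𝒮 | A ⊆ S} := by
      simp only [card_filter]; exact sum_comm
    rw [← sum_mul, hswap, sum_mul, sum_const, card_powersetCard, card_univ, smul_eq_mul]
    calc ∑ A ∈ 𝓕, #{S ∈ 𝒮 | A ⊆ S} * N ^ k
        ≤ ∑ _A ∈ 𝓕, N.choose s * s ^ k := sum_le_sum fun A hA => by
          simpa only [h𝓕 A hA] using card_filter_powersetCard_subset_mul_pow_le A hsN
      _ = N.choose s * (#𝓕 * s ^ k) := by rw [sum_const, smul_eq_mul]; ring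
      _ ≤ N.choose s * ((s - n) * N ^ k) := Nat.mul_le_mul_left _ hcard
  have h𝒮 : 𝒮.Nonempty := powersetCard_nonempty.2 (by rwa [card_univ])
  obtain ⟨S, hS, hSle⟩ := exists_le_of_sum_le h𝒮 hdouble
  have hfew : #{A ∈ 𝓕 | A ⊆ S} ≤ s - n :=
    Nat.le_of_mul_le_mul_right hSle (pow_pos Fintype.card_pos k)
  obtain ⟨T, hTS, hT, hfree⟩ := exists_subset_card_eq_forall_not_subset (S := S)
    (𝒢 := {A ∈ 𝓕 | A ⊆ S}) (n := n)
    (fun A hA => card_pos.1 ((h𝓕 A (mem_filter.1 hA).1).symm ▸ hk))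
    (by rw [(mem_powersetCard.1 hS).2]; omega)
  exact ⟨T, hT, fun A hA hAT => hfree A (mem_filter.2 ⟨hA, hAT.trans hTS⟩) hAT⟩

theorem card_filter_le_card_mul_pow_le (E : Finset ι) (L : ι → Finset α) {m W M : ℕ}
    (hmW : m ≤ W) (hL : ∀ V : Finset α, #V = m → #{e ∈ E | V ⊆ L e} ≤ M) :
    #{e ∈ E | W ≤ #(L e)} * (W + 1 - m) ^ m ≤ M * Fintype.card α ^ m := by
  set N := Fintype.card α
  set heavy : Finset ι := {e ∈ E | W ≤ #(L e)}
  have hdouble : #heavy * W.choose m ≤ #((univ : Finset α).powersetCard m) * M := by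
    refine card_mul_le_card_mul (fun e V => V ⊆ L e) (fun e he => ?_) (fun V hV => ?_)
    · calc W.choose m ≤ (#(L e)).choose m := Nat.choose_le_choose m (mem_filter.1 he).2
        _ = #((L e).powersetCard m) := (card_powersetCard m (L e)).symm
        _ ≤ _ := card_le_card fun V hV => by
          rw [mem_powersetCard] at hV
          exact (mem_bipartiteAbove _).2 ⟨mem_powersetCard.2 ⟨subset_univ _, hV.2⟩, hV.1⟩
    · exact (card_le_card (filter_subset_filter _ (filter_subset _ _))).trans
        (hL V (mem_powersetCard.1 hV).2)
  rw [card_powersetCard, card_univ] at hdouble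
  refine Nat.le_of_mul_le_mul_left ?_ (Nat.choose_pos hmW)
  calc W.choose m * (#heavy * (W + 1 - m) ^ m) = #heavy * W.choose m * (W + 1 - m) ^ m := by ring
    _ ≤ N.choose m * M * (W + 1 - m) ^ m := Nat.mul_le_mul_right _ hdouble
    _ = M * (N.choose m * (W + 1 - m) ^ m) := by ring
    _ ≤ M * (W.choose m * N ^ m) := Nat.mul_le_mul_left _ (Nat.choose_mul_pow_sub_le N W m)
    _ = W.choose m * (M * N ^ m) := by ring

end Finset

section EdgeLabeling

variable {α : Type*} [Fintype α] [DecidableEq α]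

def IsLabelFree (L : Sym2 α → Finset α) (S : Finset α) : Prop :=
  ∀ u ∈ S, ∀ v ∈ S, u ≠ v → ∀ x ∈ L s(u, v), x ∉ S

def labelTriples (L : Sym2 α → Finset α) : Finset (Finset α) :=
  (({e | ¬e.IsDiag} : Finset (Sym2 α)).sigma L).image fun p => insert p.2 p.1.toFinset

theorem card_labelTriples_le (L : Sym2 α → Finset α) :
    #(labelTriples L) ≤ ∑ e with ¬e.IsDiag, #(L e) :=
  card_image_le.trans (card_sigma _ _).le

theorem card_of_mem_labelTriples {L : Sym2 α → Finset α}
    (hL : ∀ e : Sym2 α, ¬e.IsDiag → ∀ u ∈ e, u ∉ L e) {A : Finset α}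
    (hA : A ∈ labelTriples L) : #A = 3 := by
  obtain ⟨⟨e, x⟩, he, rfl⟩ := mem_image.1 hA
  obtain ⟨he, hx⟩ := mem_sigma.1 he
  have he : ¬e.IsDiag := (mem_filter.1 he).2
  rw [card_insert_of_notMem fun hxe => hL e he x (Sym2.mem_toFinset.1 hxe) hx,
    Sym2.card_toFinset_of_not_isDiag e he]

theorem isLabelFree_of_forall_not_subset {L : Sym2 α → Finset α} {T : Finset α}
    (hT : ∀ A ∈ labelTriples L, ¬A ⊆ T) : IsLabelFree L T := by
  intro u hu v hv huv x hx hxT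
  refine hT _ (mem_image.2 ⟨⟨s(u, v), x⟩, mem_sigma.2 ⟨by simpa using huv, hx⟩, rfl⟩) ?_
  intro y hy
  simp only [mem_insert, Sym2.mem_toFinset, Sym2.mem_iff] at hy
  rcases hy with rfl | rfl | rfl <;> assumption

theorem exists_isLabelFree_of_card_heavy_le [Nonempty α] {L : Sym2 α → Finset α}
    (hL : ∀ e : Sym2 α, ¬e.IsDiag → ∀ u ∈ e, u ∉ L e) {n W : ℕ} (hW : 0 < W)
    (hWN : 16 * n ^ 2 * W ≤ Fintype.card α)
    (hheavy : #{e ∈ ({e | ¬e.IsDiag} : Finset (Sym2 α)) | W ≤ #(L e)} ≤ W) :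
    ∃ S : Finset α, #S = n ∧ IsLabelFree L S := by
  set N := Fintype.card α
  set E : Finset (Sym2 α) := {e | ¬e.IsDiag}
  have hN : 0 < N := Fintype.card_pos
  have hedges : #E ≤ N ^ 2 := by
    rw [← Fintype.card_subtype, Sym2.card_subtype_not_diag]
    exact Nat.choose_le_pow N 2
  have hlabels : ∑ e with ¬e.IsDiag, #(L e) ≤ 2 * W * N ^ 2 := by
    refine (sum_le_mul_card_add_mul_card_filter (W := W) E _ fun e _ => card_le_univ _).trans ?_
    calc W * #E + N * #{e ∈ E | W ≤ #(L e)} ≤ W * N ^ 2 + N ^ 2 * W := by gcongr; nlinarith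
      _ = 2 * W * N ^ 2 := by ring
  have htriples : #(labelTriples L) * (2 * n) ^ 3 ≤ (2 * n - n) * N ^ 3 := by
    rw [show 2 * n - n = n by omega]
    calc #(labelTriples L) * (2 * n) ^ 3 ≤ 2 * W * N ^ 2 * (2 * n) ^ 3 := by
          gcongr; exact (card_labelTriples_le L).trans hlabels
      _ = n * ((16 * n ^ 2 * W) * N ^ 2) := by ring
      _ ≤ n * (N * N ^ 2) := by gcongr
      _ = n * N ^ 3 := by ring
  obtain ⟨T, hT, hfree⟩ := exists_card_eq_forall_not_subset_of_card_mul_pow_le (by norm_num)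
    (fun A hA => card_of_mem_labelTriples hL hA) (by omega) (by nlinarith) htriples
  exact ⟨T, hT, isLabelFree_of_forall_not_subset hfree⟩

end EdgeLabeling

theorem labeled_clique_ramsey_general_general (m₁ m₂ n : ℕ)
    (hm₁ : 0 < m₁) (hn : 0 < n) :
    ∃ N : ℕ, 0 < N ∧
      ∀ L : Sym2 (Fin N) → Finset (Fin N),
        (∀ e : Sym2 (Fin N), ¬ e.IsDiag → ∀ u ∈ e, u ∉ L e) →
        (∃ S : Finset (Fin N), S.card = n ∧
          ∀ u ∈ S, ∀ v ∈ S, u ≠ v → ∀ x ∈ L s(u, v), x ∉ S) ∨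
        (∃ (Es : Finset (Sym2 (Fin N))) (Vs : Finset (Fin N)),
          Es.card = m₁ ∧ Vs.card = m₂ ∧ (∀ e ∈ Es, ¬ e.IsDiag) ∧
          ∀ e ∈ Es, ∀ x ∈ Vs, x ∈ L e) := by
  set c := 16 * n ^ 2
  -- `W ≥ 2 m₂` gives `N ≤ 2c (W + 1 - m₂)`, and then the heavy edges number at most `m₁ (2c)^m₂`
  set W := m₁ * (2 * c) ^ m₂ + 2 * m₂
  have hW : 0 < W := by positivity
  refine ⟨c * W, by positivity, fun L hL => or_iff_not_imp_right.2 fun hnot => ?_⟩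
  have : Nonempty (Fin (c * W)) := ⟨⟨0, by positivity⟩⟩
  refine exists_isLabelFree_of_card_heavy_le hL hW (by simp [c]) ?_
  have hcommon (V : Finset (Fin (c * W))) (hV : #V = m₂) :
      #{e ∈ ({e | ¬e.IsDiag} : Finset _) | V ⊆ L e} ≤ m₁ := by
    by_contra! hmany
    obtain ⟨Es, hEs, hcard⟩ := exists_subset_card_eq hmany.le
    exact hnot ⟨Es, V, hcard, hV, fun e he => (mem_filter.1 (mem_filter.1 (hEs he)).1).2,
      fun e he x hx => (mem_filter.1 (hEs he)).2 hx⟩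
  have hNW : c * W ≤ 2 * c * (W + 1 - m₂) :=
    calc c * W ≤ c * (2 * (W + 1 - m₂)) := Nat.mul_le_mul_left c (by omega)
      _ = 2 * c * (W + 1 - m₂) := by ring
  have hheavy := card_filter_le_card_mul_pow_le _ L (by omega : m₂ ≤ W) hcommon
  rw [Fintype.card_fin] at hheavy
  have hbound := hheavy.trans (Nat.mul_le_mul_left m₁ (Nat.pow_le_pow_left hNW m₂))
  rw [mul_pow, ← mul_assoc] at hbound
  exact (Nat.le_of_mul_le_mul_right hbound (pow_pos (by omega) _)).trans (Nat.le_add_right _ _)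

/-- For all positive `m₁, m₂, n` there is `N ≥ 1` such that: whenever each
edge of `K_N` is labeled with a set of vertices not containing either of its ends, either
there is a set `S` of `n` vertices such that no edge with both ends in `S` has a label in
`S`, or there are `m₁` edges and `m₂` vertices such that each of the vertices appears in the
label set of each of the edges. -/
theorem labeled_clique_ramsey_general (m₁ m₂ n : ℕ)
    (hm₁ : 0 < m₁) (hm₂ : 0 < m₂) (hn : 0 < n) :
    ∃ N : ℕ, 0 < N ∧
      ∀ L : Sym2 (Fin N) → Finset (Fin N),
        (∀ e : Sym2 (Fin N), ¬ e.IsDiag → ∀ u ∈ e, u ∉ L e) →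
        (∃ S : Finset (Fin N), S.card = n ∧
          ∀ u ∈ S, ∀ v ∈ S, u ≠ v → ∀ x ∈ L s(u, v), x ∉ S) ∨
        (∃ (Es : Finset (Sym2 (Fin N))) (Vs : Finset (Fin N)),
          Es.card = m₁ ∧ Vs.card = m₂ ∧ (∀ e ∈ Es, ¬ e.IsDiag) ∧
          ∀ e ∈ Es, ∀ x ∈ Vs, x ∈ L e) :=
  labeled_clique_ramsey_general_general m₁ m₂ n hm₁ hn
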